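/- Fix a real number κ > 1 and a point 𝔷 in the upper half-plane. For z in the upper half-plane with z ≠ 𝔷, define G(z) := y^{κ-1} (𝔷 - z̄)^{1-κ} (𝔷 - z)^{-1}, where y = Im z. Then ξ_{2-κ}(G)(z) = (κ-1)(𝔷̄ - z)^{-κ}, where ξ_{2-κ}(G)(z) := 2i y^{2-κ} · conjugate(∂G/∂z̄)(z). -/

import Mathlib

open Complex

noncomputable section

/-- Partial derivative in the real (`x`) direction. -/
def pdx (F : ℂ → ℂ) (z : ℂ) : ℂ := fderiv ℝ F z 1

/-- Partial derivative in the imaginary (`y`) direction. -/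
def pdy (F : ℂ → ℂ) (z : ℂ) : ℂ := fderiv ℝ F z Complex.I

/-- Wirtinger derivative `∂/∂z`. -/
def wdz (F : ℂ → ℂ) (z : ℂ) : ℂ := (pdx F z - Complex.I * pdy F z) / 2

/-- Wirtinger derivative `∂/∂z̄`. -/
def wdzbar (F : ℂ → ℂ) (z : ℂ) : ℂ := (pdx F z + Complex.I * pdy F z) / 2

/-- The operator `ξ_κ F := 2i y^κ ⋅ conj(∂F/∂z̄)`. -/
def xiOp (κ : ℝ) (F : ℂ → ℂ) (z : ℂ) : ℂ :=
  2 * Complex.I * ((z.im ^ κ : ℝ) : ℂ) * (starRingEnd ℂ) (wdzbar F z)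

/-- The weight `κ` hyperbolic Laplacian
`Δ_κ := -y²(∂²/∂x² + ∂²/∂y²) + iκy(∂/∂x + i ∂/∂y)`. -/
def hypLap (κ : ℝ) (F : ℂ → ℂ) (z : ℂ) : ℂ :=
  -(z.im : ℂ) ^ 2 * (pdx (pdx F) z + pdy (pdy F) z)
    + Complex.I * κ * z.im * (pdx F z + Complex.I * pdy F z)

/-- The Maass raising operator `R_κ := 2i ∂/∂z + κ/y`. -/
def raiseOp (κ : ℝ) (F : ℂ → ℂ) (z : ℂ) : ℂ :=
  2 * Complex.I * wdz F z + (κ : ℂ) / z.im * F z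

/-- The Maass lowering operator `L_κ := -2i y² ∂/∂z̄`. -/
def lowerOp (κ : ℝ) (F : ℂ → ℂ) (z : ℂ) : ℂ :=
  -2 * Complex.I * (z.im : ℂ) ^ 2 * wdzbar F z

end

/-! In `G` the factor `(𝔷 - z)⁻¹` is holomorphic and `(𝔷 - z̄)^{1-κ}` is antiholomorphic, so
`∂/∂z̄` only differentiates `y^{κ-1}` (with `∂y/∂z̄ = i/2`) and the antiholomorphic factor.
Because `𝔷 - z̄ = (𝔷 - z) + 2iy`, the two contributions add up to
`(i/2)(κ-1) y^{κ-2} (𝔷 - z̄)^{-κ}`. Conjugating and multiplying by `2i y^{2-κ}` gives the claim;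
since `𝔷 - z̄` lies in the upper half-plane, the conjugate of its principal power is the
principal power of its conjugate. -/

open ComplexConjugate

section Wirtinger

variable {f g : ℂ → ℂ} {z : ℂ}

theorem wdzbar_eq_of_hasFDerivAt {L : ℂ →L[ℝ] ℂ} (h : HasFDerivAt f L z) :
    wdzbar f z = (L 1 + I * L I) / 2 := by
  rw [wdzbar, pdx, pdy, h.fderiv]

theorem wdzbar_fun_mul (hf : DifferentiableAt ℝ f z) (hg : DifferentiableAt ℝ g z) :
    wdzbar (fun w => f w * g w) z = wdzbar f z * g z + f z * wdzbar g z := by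
  simp only [wdzbar, pdx, pdy, fderiv_fun_mul hf hg, add_apply, smul_apply, smul_eq_mul]
  ring

theorem wdzbar_eq_zero_of_hasDerivAt {f' : ℂ} (h : HasDerivAt f f' z) : wdzbar f z = 0 := by
  rw [wdzbar_eq_of_hasFDerivAt (h.hasFDerivAt.restrictScalars ℝ)]
  simp only [ContinuousLinearMap.coe_restrictScalars', ContinuousLinearMap.toSpanSingleton_apply,
    smul_eq_mul]
  linear_combination f' / 2 * I_sq

theorem wdzbar_comp_conj {f' : ℂ} (h : HasDerivAt f f' (conj z)) :
    wdzbar (fun w => f (conj w)) z = f' := by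
  refine (wdzbar_eq_of_hasFDerivAt (f := fun w => f (conj w))
    ((h.hasFDerivAt.restrictScalars ℝ).comp z (conjCLE : ℂ →L[ℝ] ℂ).hasFDerivAt)).trans ?_
  simp only [ContinuousLinearMap.comp_apply, ContinuousLinearEquiv.coe_coe,
    ContinuousAlgEquiv.coeCLE_apply, conjCAE_apply, map_one, conj_I,
    ContinuousLinearMap.coe_restrictScalars', ContinuousLinearMap.toSpanSingleton_apply, smul_eq_mul]
  linear_combination -(f' / 2) * I_sq

theorem wdzbar_ofReal_comp_im {g : ℝ → ℝ} {g' : ℝ} (h : HasDerivAt g g' z.im) :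
    wdzbar (fun w => (g w.im : ℂ)) z = I * g' / 2 := by
  refine (wdzbar_eq_of_hasFDerivAt (f := fun w => (g w.im : ℂ)) (ofRealCLM.hasFDerivAt.comp z
    (h.hasFDerivAt.comp z imCLM.hasFDerivAt))).trans ?_
  simp

end Wirtinger

theorem conj_cpow_ofReal {x : ℂ} (hx : x.arg ≠ Real.pi) (r : ℝ) :
    conj (x ^ (r : ℂ)) = conj x ^ (r : ℂ) := by
  rw [conj_cpow x _ hx, conj_ofReal]

theorem wdzbar_G (κ : ℝ) {𝔷 z : ℂ} (hz : 0 < z.im) (ha : 𝔷 - conj z ∈ slitPlane) (hne : z ≠ 𝔷) :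
    wdzbar (fun w => ((w.im ^ (κ - 1) : ℝ) : ℂ) * (𝔷 - conj w) ^ ((1 - κ : ℝ) : ℂ)
        * (𝔷 - w)⁻¹) z
      = I / 2 * (κ - 1) * ((z.im ^ (κ - 2) : ℝ) : ℂ) * (𝔷 - conj z) ^ ((-κ : ℝ) : ℂ) := by
  have hb : 𝔷 - z ≠ 0 := sub_ne_zero.2 hne.symm
  have hA : HasDerivAt (fun t : ℝ => t ^ (κ - 1)) ((κ - 1) * z.im ^ (κ - 1 - 1)) z.im :=
    Real.hasDerivAt_rpow_const (Or.inl hz.ne')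
  have hB : HasDerivAt (fun u => (𝔷 - u) ^ ((1 - κ : ℝ) : ℂ))
      (((1 - κ : ℝ) : ℂ) * (𝔷 - conj z) ^ (((1 - κ : ℝ) : ℂ) - 1) * -1) (conj z) :=
    ((hasDerivAt_id (conj z)).const_sub 𝔷).cpow_const ha
  have hC : HasDerivAt (fun w => (𝔷 - w)⁻¹) (- -1 / (𝔷 - z) ^ 2) z :=
    ((hasDerivAt_id z).const_sub 𝔷).inv hb
  have dA : DifferentiableAt ℝ (fun w : ℂ => ((w.im ^ (κ - 1) : ℝ) : ℂ)) z :=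
    ofRealCLM.differentiableAt.comp z (hA.differentiableAt.comp z imCLM.differentiableAt)
  have dB : DifferentiableAt ℝ (fun w : ℂ => (𝔷 - conj w) ^ ((1 - κ : ℝ) : ℂ)) z :=
    (hB.differentiableAt.restrictScalars ℝ).comp z (conjCLE : ℂ →L[ℝ] ℂ).differentiableAt
  rw [wdzbar_fun_mul (dA.fun_mul dB) (hC.differentiableAt.restrictScalars ℝ), wdzbar_fun_mul dA dB,
    wdzbar_ofReal_comp_im hA, wdzbar_comp_conj hB, wdzbar_eq_zero_of_hasDerivAt hC]
  have hpow : (𝔷 - conj z) ^ ((1 - κ : ℝ) : ℂ) = (𝔷 - conj z) * (𝔷 - conj z) ^ ((-κ : ℝ) : ℂ) := by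
    rw [show ((1 - κ : ℝ) : ℂ) = 1 + ((-κ : ℝ) : ℂ) by push_cast; ring,
      cpow_add _ _ (slitPlane_ne_zero ha), cpow_one]
  have hy : ((z.im ^ (κ - 1) : ℝ) : ℂ) = z.im * ((z.im ^ (κ - 2) : ℝ) : ℂ) := by
    rw [show κ - 1 = 1 + (κ - 2) by ring, Real.rpow_add hz, Real.rpow_one, ofReal_mul]
  have hconj : 𝔷 - conj z = 𝔷 - z + 2 * z.im * I := by
    rw [show 𝔷 - conj z = 𝔷 - z + (z - conj z) by ring, sub_conj]
    push_cast
    ring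
  rw [show κ - 1 - 1 = κ - 2 by ring, show ((1 - κ : ℝ) : ℂ) - 1 = ((-κ : ℝ) : ℂ) by push_cast; ring,
    hpow, hy]
  generalize (𝔷 - conj z) ^ ((-κ : ℝ) : ℂ) = P
  rw [hconj]
  push_cast
  field_simp
  linear_combination 2 * ((z.im ^ (κ - 2) : ℝ) : ℂ) * P * (κ - 1) * z.im * I_sq

theorem xi_of_G_general (κ : ℝ) (𝔷 : ℂ) (h𝔷 : 0 < 𝔷.im) :
    ∀ z : ℂ, 0 < z.im → z ≠ 𝔷 →
      xiOp (2 - κ)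
        (fun w => ((w.im ^ (κ - 1) : ℝ) : ℂ) * (𝔷 - (starRingEnd ℂ) w) ^ ((1 - κ : ℝ) : ℂ)
          * (𝔷 - w)⁻¹) z
      = ((κ : ℂ) - 1) * ((starRingEnd ℂ) 𝔷 - z) ^ ((-κ : ℝ) : ℂ) := by
  intro z hz hne
  have ha : 𝔷 - conj z ∈ slitPlane :=
    mem_slitPlane_iff.2 (Or.inr (by simp only [sub_im, conj_im]; linarith))
  have hy : ((z.im ^ (2 - κ) : ℝ) : ℂ) * ((z.im ^ (κ - 2) : ℝ) : ℂ) = 1 := by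
    rw [← ofReal_mul, ← Real.rpow_add hz, sub_add_sub_cancel', sub_self, Real.rpow_zero, ofReal_one]
  rw [xiOp, wdzbar_G κ hz ha hne, map_mul, conj_cpow_ofReal (mem_slitPlane_iff_arg.1 ha).1]
  simp only [map_mul, map_div₀, map_sub, conj_I, conj_ofReal, conj_conj, map_ofNat, map_one]
  set C := (conj 𝔷 - z) ^ ((-κ : ℝ) : ℂ)
  linear_combination ((κ : ℂ) - 1) * C * hy
    - ((κ : ℂ) - 1) * C * ((z.im ^ (2 - κ) : ℝ) : ℂ) * ((z.im ^ (κ - 2) : ℝ) : ℂ) * I_sq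

/-- For `κ > 1` and `𝔷 ∈ ℍ`, setting `G(z) = y^{κ-1} (𝔷 - z̄)^{1-κ} (𝔷 - z)^{-1}`,
one has `ξ_{2-κ}(G)(z) = (κ-1)(𝔷̄ - z)^{-κ}` for `z ∈ ℍ`, `z ≠ 𝔷`. -/
theorem xi_of_G (κ : ℝ) (hκ : 1 < κ) (𝔷 : ℂ) (h𝔷 : 0 < 𝔷.im) :
    ∀ z : ℂ, 0 < z.im → z ≠ 𝔷 →
      xiOp (2 - κ)
        (fun w => ((w.im ^ (κ - 1) : ℝ) : ℂ) * (𝔷 - (starRingEnd ℂ) w) ^ ((1 - κ : ℝ) : ℂ)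
          * (𝔷 - w)⁻¹) z
      = ((κ : ℂ) - 1) * ((starRingEnd ℂ) 𝔷 - z) ^ ((-κ : ℝ) : ℂ) :=
  xi_of_G_general κ 𝔷 h𝔷
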